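/- arXiv:1104.2858 — 2 statements merged into one kernel-verified Lean document; each statement's English description precedes it below -/
import Mathlib

section
/- Let A_n be a flat associative algebra over R_n flat over Z/p^{n+1}Z, n ≥ 1. Define {x,y} = (1/p)[x̃,ỹ] mod p for x, y in the center Z_0 of A_0 (liftings x̃, ỹ ∈ A_1). Then {,} is well-defined (independent of liftings), is a biderivation (a derivation in each argument over R_0), and if n > 1 it satisfies the Jacobi identity, making Z_0 a Poisson algebra. -/
/-!
Because `p` is central, the defect of each bracket identity among the liftings is a sum of terms
`[x, p e] = p [x, e]` with `x` central modulo `p`, hence lies in `p²A`: the identities hold modulo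
`p²`, and flatness (the kernel of `p` lies in `pA`) divides them by `p`. For the Jacobi identity,
`p² ({x,{y,z}} + {y,{z,x}} + {z,{x,y}})` is congruent modulo `p³` to the Jacobi sum of the
commutators, which vanishes; dividing by `p²` needs the kernel of `p²` to lie in `pA`, i.e. `n ≥ 2`.
-/

attribute [local instance] LieRing.ofAssociativeRing

section

variable {A : Type*} [Ring A]

theorem dvd_mul_left_of_forall_commute {c b : A} (hc : ∀ a, Commute c a) (a : A) (h : c ∣ b) :
    c ∣ a * b := by
  obtain ⟨d, rfl⟩ := h
  exact ⟨a * d, by rw [← mul_assoc, ← (hc a).eq, mul_assoc]⟩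

theorem lie_mul_right_of_forall_commute {c : A} (hc : ∀ a, Commute c a) (a b : A) :
    ⁅a, c * b⁆ = c * ⁅a, b⁆ := by
  rw [Ring.lie_def, Ring.lie_def, mul_sub, ← mul_assoc, ← (hc a).eq, mul_assoc, mul_assoc]

theorem lie_mul_left_of_forall_commute {c : A} (hc : ∀ a, Commute c a) (a b : A) :
    ⁅c * a, b⁆ = c * ⁅a, b⁆ := by
  rw [← lie_skew, lie_mul_right_of_forall_commute hc, ← mul_neg, lie_skew]

theorem dvd_of_pow_succ_dvd_pow_mul {ϖ t : A} {k : ℕ} (htors : ∀ a, ϖ ^ k * a = 0 → ϖ ∣ a)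
    (h : ϖ ^ (k + 1) ∣ ϖ ^ k * t) : ϖ ∣ t := by
  obtain ⟨c, hc⟩ := h
  have hsub : ϖ ∣ t - ϖ * c := htors _ (by rw [mul_sub, hc, pow_succ, mul_assoc, sub_self])
  exact (dvd_sub_left (dvd_mul_right ϖ c)).mp hsub

/-- `x` lifts an element of the center of `A / ϖA`. -/
def IsCentralMod (ϖ x : A) : Prop := ∀ a, ϖ ∣ ⁅x, a⁆

/-- `u` lifts `(1/ϖ) ⁅x, y⁆ mod ϖ`. -/
def IsBracketLift (ϖ x y u : A) : Prop := ϖ ^ 2 ∣ ⁅x, y⁆ - ϖ * u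

variable {ϖ x x' y y' z u u' v w : A}

theorem IsCentralMod.pow_succ_dvd_pow_mul_lie (hx : IsCentralMod ϖ x) (k : ℕ) (s : A) :
    ϖ ^ (k + 1) ∣ ϖ ^ k * ⁅x, s⁆ := by
  rw [pow_succ]
  exact mul_dvd_mul_left _ (hx s)

theorem IsCentralMod.pow_succ_dvd_lie_pow_mul (hϖ : ∀ a, Commute ϖ a) (hx : IsCentralMod ϖ x)
    (k : ℕ) (s : A) : ϖ ^ (k + 1) ∣ ⁅x, ϖ ^ k * s⁆ := by
  rw [lie_mul_right_of_forall_commute (fun a => (hϖ a).pow_left k)]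
  exact hx.pow_succ_dvd_pow_mul_lie k s

theorem IsBracketLift.dvd_sub (htors : ∀ a, ϖ * a = 0 → ϖ ∣ a) (hu : IsBracketLift ϖ x y u)
    (hu' : IsBracketLift ϖ x y u') : ϖ ∣ u - u' := by
  refine dvd_of_pow_succ_dvd_pow_mul (k := 1) (by simpa using htors) ?_
  convert _root_.dvd_sub hu' hu using 1
  rw [pow_one, mul_sub]
  abel

theorem pow_two_dvd_lie_sub_lie (hϖ : ∀ a, Commute ϖ a) (hx : IsCentralMod ϖ x)
    (hy : IsCentralMod ϖ y) (hxx' : ϖ ∣ x - x') (hyy' : ϖ ∣ y - y') :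
    ϖ ^ 2 ∣ ⁅x, y⁆ - ⁅x', y'⁆ := by
  obtain ⟨d, hd⟩ := hxx'
  obtain ⟨e, he⟩ := hyy'
  obtain rfl : x' = x - ϖ * d := by rw [← hd]; abel
  obtain rfl : y' = y - ϖ * e := by rw [← he]; abel
  have hdy : ϖ ^ 2 ∣ ⁅ϖ * d, y⁆ := by
    rw [← lie_skew, dvd_neg]
    simpa using hy.pow_succ_dvd_lie_pow_mul hϖ 1 d
  have hxe : ϖ ^ 2 ∣ ⁅x, ϖ * e⁆ := by simpa using hx.pow_succ_dvd_lie_pow_mul hϖ 1 e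
  have hde : ϖ ^ 2 ∣ ⁅ϖ * d, ϖ * e⁆ := by
    rw [lie_mul_right_of_forall_commute hϖ, lie_mul_left_of_forall_commute hϖ, ← mul_assoc,
      ← pow_two]
    exact dvd_mul_right _ _
  convert (dvd_add hdy hxe).sub hde using 1
  simp only [sub_lie, lie_sub]
  abel

theorem IsBracketLift.of_dvd_sub (hϖ : ∀ a, Commute ϖ a) (hx : IsCentralMod ϖ x)
    (hy : IsCentralMod ϖ y) (hxx' : ϖ ∣ x - x') (hyy' : ϖ ∣ y - y')
    (hu : IsBracketLift ϖ x' y' u) : IsBracketLift ϖ x y u := by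
  unfold IsBracketLift at *
  convert (pow_two_dvd_lie_sub_lie hϖ hx hy hxx' hyy').add hu using 1
  abel

theorem IsBracketLift.add_left (hu : IsBracketLift ϖ x y u) (hu' : IsBracketLift ϖ x' y u') :
    IsBracketLift ϖ (x + x') y (u + u') := by
  rw [IsBracketLift, add_lie, mul_add]
  convert dvd_add hu hu' using 1
  abel

theorem IsBracketLift.mul_left (hϖ : ∀ a, Commute ϖ a) (hz : IsCentralMod ϖ z)
    (hv : IsBracketLift ϖ x y v) (hw : IsBracketLift ϖ z y w) :
    IsBracketLift ϖ (x * z) y (x * w + z * v) := by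
  have hzv : ϖ ^ 2 ∣ ϖ * ⁅z, v⁆ := by simpa using hz.pow_succ_dvd_pow_mul_lie 1 v
  have hleibniz : ⁅x * z, y⁆ - ϖ * (x * w + z * v)
      = x * (⁅z, y⁆ - ϖ * w) + (⁅x, y⁆ - ϖ * v) * z - ϖ * ⁅z, v⁆ := by
    simp only [Ring.lie_def]
    linear_combination (norm := noncomm_ring) -(hϖ x).eq * w
  rw [IsBracketLift, hleibniz]
  exact ((dvd_mul_left_of_forall_commute (fun a => (hϖ a).pow_left 2) x hw).add
    (hv.mul_right z)).sub hzv

theorem IsBracketLift.pow_three_dvd_lie_lie (hϖ : ∀ a, Commute ϖ a) (hx : IsCentralMod ϖ x)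
    (hv : IsBracketLift ϖ y z v) (hu : IsBracketLift ϖ x v u) :
    ϖ ^ 3 ∣ ⁅x, ⁅y, z⁆⁆ - ϖ ^ 2 * u := by
  obtain ⟨s, hs⟩ := hv
  have hsplit : ⁅x, ⁅y, z⁆⁆ - ϖ ^ 2 * u = ⁅x, ϖ ^ 2 * s⁆ + ϖ * (⁅x, v⁆ - ϖ * u) := by
    rw [← hs, lie_sub, lie_mul_right_of_forall_commute hϖ, mul_sub, ← mul_assoc, ← pow_two]
    abel
  rw [hsplit]
  exact (hx.pow_succ_dvd_lie_pow_mul hϖ 2 s).add (by rw [pow_succ']; exact mul_dvd_mul_left ϖ hu)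

theorem IsBracketLift.jacobi {a b c : A} (hϖ : ∀ a, Commute ϖ a)
    (htors : ∀ a, ϖ ^ 2 * a = 0 → ϖ ∣ a)
    (hx : IsCentralMod ϖ x) (hy : IsCentralMod ϖ y) (hz : IsCentralMod ϖ z)
    (ha : IsBracketLift ϖ y z a) (hb : IsBracketLift ϖ z x b) (hc : IsBracketLift ϖ x y c)
    (hu : IsBracketLift ϖ x a u) (hv : IsBracketLift ϖ y b v) (hw : IsBracketLift ϖ z c w) :
    ϖ ∣ u + v + w := by
  refine dvd_of_pow_succ_dvd_pow_mul htors ?_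
  have hsum := ((ha.pow_three_dvd_lie_lie hϖ hx hu).add
    (hb.pow_three_dvd_lie_lie hϖ hy hv)).add (hc.pow_three_dvd_lie_lie hϖ hz hw)
  rw [← dvd_neg]
  convert hsum using 1
  linear_combination (norm := noncomm_ring) -lie_jacobi x y z

end

theorem bracket_well_defined_biderivation_jacobi_general (p n : ℕ) (hn : 1 ≤ n)
    (A : Type*) [Ring A]
    (hflat : ∀ k ≤ n + 1, ∀ a : A, (p : A) ^ k * a = 0 → ∃ b : A, a = (p : A) ^ (n + 1 - k) * b) :
    -- (1) independence of the liftings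
    (∀ x x' y y' u u' : A,
      (∀ a : A, ∃ b : A, x * a - a * x = (p : A) * b) →
      (∀ a : A, ∃ b : A, y * a - a * y = (p : A) * b) →
      (∃ a : A, x - x' = (p : A) * a) → (∃ a : A, y - y' = (p : A) * a) →
      (∃ a : A, (x * y - y * x) - (p : A) * u = (p : A) ^ 2 * a) →
      (∃ a : A, (x' * y' - y' * x') - (p : A) * u' = (p : A) ^ 2 * a) →
      ∃ a : A, u - u' = (p : A) * a) ∧
    -- (2a) additivity in the first argument
    (∀ x x' y u u' v : A,
      (∀ a : A, ∃ b : A, x * a - a * x = (p : A) * b) →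
      (∀ a : A, ∃ b : A, x' * a - a * x' = (p : A) * b) →
      (∀ a : A, ∃ b : A, y * a - a * y = (p : A) * b) →
      (∃ a : A, (x * y - y * x) - (p : A) * u = (p : A) ^ 2 * a) →
      (∃ a : A, (x' * y - y * x') - (p : A) * u' = (p : A) ^ 2 * a) →
      (∃ a : A, ((x + x') * y - y * (x + x')) - (p : A) * v = (p : A) ^ 2 * a) →
      ∃ a : A, v - (u + u') = (p : A) * a) ∧
    -- (2b) the Leibniz rule in the first argument: {xz, y} = x{z,y} + z{x,y}
    (∀ x z y u v w : A,
      (∀ a : A, ∃ b : A, x * a - a * x = (p : A) * b) →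
      (∀ a : A, ∃ b : A, z * a - a * z = (p : A) * b) →
      (∀ a : A, ∃ b : A, y * a - a * y = (p : A) * b) →
      (∃ a : A, ((x * z) * y - y * (x * z)) - (p : A) * u = (p : A) ^ 2 * a) →
      (∃ a : A, (x * y - y * x) - (p : A) * v = (p : A) ^ 2 * a) →
      (∃ a : A, (z * y - y * z) - (p : A) * w = (p : A) ^ 2 * a) →
      ∃ a : A, u - (x * w + z * v) = (p : A) * a) ∧
    -- (3) Jacobi identity when n > 1: {x,{y,z}} + {z,{x,y}} + {y,{z,x}} = 0
    (1 < n → ∀ x y z a b c u v w : A,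
      (∀ t : A, ∃ s : A, x * t - t * x = (p : A) * s) →
      (∀ t : A, ∃ s : A, y * t - t * y = (p : A) * s) →
      (∀ t : A, ∃ s : A, z * t - t * z = (p : A) * s) →
      (∃ s : A, (y * z - z * y) - (p : A) * a = (p : A) ^ 2 * s) →
      (∃ s : A, (z * x - x * z) - (p : A) * b = (p : A) ^ 2 * s) →
      (∃ s : A, (x * y - y * x) - (p : A) * c = (p : A) ^ 2 * s) →
      (∃ s : A, (x * a - a * x) - (p : A) * u = (p : A) ^ 2 * s) →
      (∃ s : A, (y * b - b * y) - (p : A) * v = (p : A) ^ 2 * s) →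
      (∃ s : A, (z * c - c * z) - (p : A) * w = (p : A) ^ 2 * s) →
      ∃ s : A, u + v + w = (p : A) * s) := by
  have hp : ∀ a : A, Commute (p : A) a := Nat.cast_commute p
  have htors : ∀ k ≤ n, ∀ a : A, (p : A) ^ k * a = 0 → (p : A) ∣ a := fun k hk a ha =>
    (dvd_pow_self _ (by omega)).trans (hflat k (by omega) a ha)
  have htors₁ : ∀ a : A, (p : A) * a = 0 → (p : A) ∣ a := by simpa using htors 1 hn
  refine ⟨fun x x' y y' u u' hx hy hxx' hyy' hu hu' => ?_,
    fun x x' y u u' v _ _ _ hu hu' hv => ?_, fun x z y u v w _ hz _ hu hv hw => ?_,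
    fun hn₂ x y z a b c u v w hx hy hz ha hb hc hu hv hw => ?_⟩
  · exact IsBracketLift.dvd_sub htors₁ hu (IsBracketLift.of_dvd_sub hp hx hy hxx' hyy' hu')
  · exact IsBracketLift.dvd_sub htors₁ hv (IsBracketLift.add_left hu hu')
  · exact IsBracketLift.dvd_sub htors₁ hu (IsBracketLift.mul_left hp hz hv hw)
  · exact IsBracketLift.jacobi hp (htors 2 hn₂) hx hy hz ha hb hc hu hv hw

/-- Let `A = A_n` be flat over `ℤ/p^{n+1}ℤ`, `n ≥ 1` (so `p^{n+1} = 0` in `A`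
and multiplication by `p^k` has kernel `p^{n+1-k}A`).  Elements of the center `Z_0` of
`A_0 = A/pA` are represented by liftings `x ∈ A` central modulo `p` (all commutators with
`x` lie in `pA`).  The bracket `{x,y} = (1/p)[x̃,ỹ] mod p` is represented by any `u` with
`p·u ≡ [x̃,ỹ] mod p²`.  Then:
(1) well-definedness: `u mod p` does not depend on the choices of liftings;
(2) `{,}` is a biderivation: it is additive and satisfies Leibniz's rule in the first
argument (hence, being antisymmetric, in each argument);
(3) if `n > 1`, `{,}` satisfies the Jacobi identity, so `Z_0` is a Poisson algebra. -/
theorem bracket_well_defined_biderivation_jacobi (p n : ℕ) (hp : p.Prime) (hn : 1 ≤ n)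
    (A : Type*) [Ring A]
    (hchar : (p : A) ^ (n + 1) = 0)
    (hflat : ∀ k ≤ n + 1, ∀ a : A, (p : A) ^ k * a = 0 → ∃ b : A, a = (p : A) ^ (n + 1 - k) * b) :
    -- (1) independence of the liftings
    (∀ x x' y y' u u' : A,
      (∀ a : A, ∃ b : A, x * a - a * x = (p : A) * b) →
      (∀ a : A, ∃ b : A, y * a - a * y = (p : A) * b) →
      (∃ a : A, x - x' = (p : A) * a) → (∃ a : A, y - y' = (p : A) * a) →
      (∃ a : A, (x * y - y * x) - (p : A) * u = (p : A) ^ 2 * a) →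
      (∃ a : A, (x' * y' - y' * x') - (p : A) * u' = (p : A) ^ 2 * a) →
      ∃ a : A, u - u' = (p : A) * a) ∧
    -- (2a) additivity in the first argument
    (∀ x x' y u u' v : A,
      (∀ a : A, ∃ b : A, x * a - a * x = (p : A) * b) →
      (∀ a : A, ∃ b : A, x' * a - a * x' = (p : A) * b) →
      (∀ a : A, ∃ b : A, y * a - a * y = (p : A) * b) →
      (∃ a : A, (x * y - y * x) - (p : A) * u = (p : A) ^ 2 * a) →
      (∃ a : A, (x' * y - y * x') - (p : A) * u' = (p : A) ^ 2 * a) →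
      (∃ a : A, ((x + x') * y - y * (x + x')) - (p : A) * v = (p : A) ^ 2 * a) →
      ∃ a : A, v - (u + u') = (p : A) * a) ∧
    -- (2b) the Leibniz rule in the first argument: {xz, y} = x{z,y} + z{x,y}
    (∀ x z y u v w : A,
      (∀ a : A, ∃ b : A, x * a - a * x = (p : A) * b) →
      (∀ a : A, ∃ b : A, z * a - a * z = (p : A) * b) →
      (∀ a : A, ∃ b : A, y * a - a * y = (p : A) * b) →
      (∃ a : A, ((x * z) * y - y * (x * z)) - (p : A) * u = (p : A) ^ 2 * a) →
      (∃ a : A, (x * y - y * x) - (p : A) * v = (p : A) ^ 2 * a) →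
      (∃ a : A, (z * y - y * z) - (p : A) * w = (p : A) ^ 2 * a) →
      ∃ a : A, u - (x * w + z * v) = (p : A) * a) ∧
    -- (3) Jacobi identity when n > 1: {x,{y,z}} + {z,{x,y}} + {y,{z,x}} = 0
    (1 < n → ∀ x y z a b c u v w : A,
      (∀ t : A, ∃ s : A, x * t - t * x = (p : A) * s) →
      (∀ t : A, ∃ s : A, y * t - t * y = (p : A) * s) →
      (∀ t : A, ∃ s : A, z * t - t * z = (p : A) * s) →
      (∃ s : A, (y * z - z * y) - (p : A) * a = (p : A) ^ 2 * s) →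
      (∃ s : A, (z * x - x * z) - (p : A) * b = (p : A) ^ 2 * s) →
      (∃ s : A, (x * y - y * x) - (p : A) * c = (p : A) ^ 2 * s) →
      (∃ s : A, (x * a - a * x) - (p : A) * u = (p : A) ^ 2 * s) →
      (∃ s : A, (y * b - b * y) - (p : A) * v = (p : A) ^ 2 * s) →
      (∃ s : A, (z * c - c * z) - (p : A) * w = (p : A) ^ 2 * s) →
      ∃ s : A, u + v + w = (p : A) * s) :=
  bracket_well_defined_biderivation_jacobi_general p n hn A hflat
end

section
/- In characteristic 2, with ω = dη an exact symplectic form on a smooth R_0-algebra Z_0, the map Q: T_{Z_0/R_0} → Z_0 defined by Q(θ) = L_θ i_θ η − i_{θ^{[2]}} η satisfies Q(θ_1+θ_2) − Q(θ_1) − Q(θ_2) = i_{θ_1} i_{θ_2} ω and Q(zθ) = z²·Q(θ) for z ∈ Z_0; i.e., Q is a quadratic refinement of the symmetric bilinear form given by ω. -/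
open KaehlerDifferential

/-- The square `θ^{[2]} = θ ∘ θ` of a derivation, which is again a derivation in
characteristic `2` (the second power in the restricted Lie algebra of derivations). -/
noncomputable def derSq {R A : Type*} [CommRing R] [CommRing A] [Algebra R A]
    (h2 : (2 : A) = 0) (θ : Derivation R A A) : Derivation R A A where
  toLinearMap := θ.toLinearMap ∘ₗ θ.toLinearMap
  map_one_eq_zero' := by simp
  leibniz' := fun a b => by
    have h : (θ : A → A) ((θ : A → A) (a * b)) =
        a * (θ : A → A) ((θ : A → A) b) + b * (θ : A → A) ((θ : A → A) a) +
          2 * ((θ : A → A) a * (θ : A → A) b) := by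
      rw [Derivation.leibniz]
      simp only [smul_eq_mul, map_add, Derivation.leibniz]
      ring
    simp only [LinearMap.coe_comp, Function.comp_apply, Derivation.coeFn_coe, smul_eq_mul]
    rw [h, h2]
    ring

/-- The pairing `i_θ η` of a vector field (derivation) with a `1`-form. -/
noncomputable def pairD {R A : Type*} [CommRing R] [CommRing A] [Algebra R A]
    (θ : Derivation R A A) (η : Ω[A⁄R]) : A :=
  θ.liftKaehlerDifferential η

/-- The `2`-form `ω = dη` evaluated on a pair of vector fields, by Cartan's formula:
`dη(θ₁,θ₂) = θ₁⟨θ₂,η⟩ − θ₂⟨θ₁,η⟩ − ⟨[θ₁,θ₂],η⟩`. -/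
noncomputable def dEta {R A : Type*} [CommRing R] [CommRing A] [Algebra R A]
    (η : Ω[A⁄R]) (θ₁ θ₂ : Derivation R A A) : A :=
  θ₁ (pairD θ₂ η) - θ₂ (pairD θ₁ η) - pairD ⁅θ₁, θ₂⁆ η

/-- The quadratic map `Q(θ) = L_θ i_θ η − i_{θ^{[2]}} η` associated to a primitive `η` of the
symplectic form `ω = dη` in characteristic `2`. -/
noncomputable def Qform {R A : Type*} [CommRing R] [CommRing A] [Algebra R A]
    (h2 : (2 : A) = 0) (η : Ω[A⁄R]) (θ : Derivation R A A) : A :=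
  θ (pairD θ η) - pairD (derSq h2 θ) η

/-! Both identities are direct computations once one knows how the square of a derivation
behaves: `(θ₁ + θ₂)^{[2]} = θ₁^{[2]} + θ₂^{[2]} + [θ₁, θ₂]` (the cross term `2 θ₂ θ₁` vanishes) and
`(z θ)^{[2]} = z² θ^{[2]} + z θ(z) θ`. Since `i_θ η` is `A`-linear in `θ`, the bracket term
produces the last summand of Cartan's formula for `dη(θ₁, θ₂)` and the term `z θ(z) θ` cancels
against the Leibniz term of `L_{zθ} i_{zθ} η`. -/

section

variable {R A : Type*} [CommRing R] [CommRing A] [Algebra R A]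

lemma pairD_eq_linearMapEquivDerivation_symm (θ : Derivation R A A) (η : Ω[A⁄R]) :
    pairD θ η = (linearMapEquivDerivation R A).symm θ η := rfl

lemma pairD_add (θ₁ θ₂ : Derivation R A A) (η : Ω[A⁄R]) :
    pairD (θ₁ + θ₂) η = pairD θ₁ η + pairD θ₂ η := by
  simp only [pairD_eq_linearMapEquivDerivation_symm, map_add, LinearMap.add_apply]

lemma pairD_smul (z : A) (θ : Derivation R A A) (η : Ω[A⁄R]) :
    pairD (z • θ) η = z * pairD θ η := by
  simp only [pairD_eq_linearMapEquivDerivation_symm, map_smul, LinearMap.smul_apply, smul_eq_mul]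

variable (h2 : (2 : A) = 0)

lemma derSq_apply (θ : Derivation R A A) (a : A) : derSq h2 θ a = θ (θ a) := rfl

lemma derSq_add (θ₁ θ₂ : Derivation R A A) :
    derSq h2 (θ₁ + θ₂) = derSq h2 θ₁ + derSq h2 θ₂ + ⁅θ₁, θ₂⁆ := by
  ext a
  simp only [derSq_apply, Derivation.add_apply, Derivation.commutator_apply, map_add]
  linear_combination (θ₂ (θ₁ a)) * h2

lemma derSq_smul (z : A) (θ : Derivation R A A) :
    derSq h2 (z • θ) = z ^ 2 • derSq h2 θ + (z * θ z) • θ := by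
  ext a
  simp only [derSq_apply, Derivation.add_apply, Derivation.smul_apply, Derivation.leibniz,
    smul_eq_mul]
  ring

lemma Qform_add_sub_Qform_sub_Qform (η : Ω[A⁄R]) (θ₁ θ₂ : Derivation R A A) :
    Qform h2 η (θ₁ + θ₂) - Qform h2 η θ₁ - Qform h2 η θ₂ = dEta η θ₁ θ₂ := by
  simp only [Qform, dEta, pairD_add, derSq_add, map_add, Derivation.add_apply]
  linear_combination (θ₂ (pairD θ₁ η)) * h2

lemma Qform_smul (η : Ω[A⁄R]) (z : A) (θ : Derivation R A A) :
    Qform h2 η (z • θ) = z ^ 2 * Qform h2 η θ := by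
  simp only [Qform, derSq_smul, pairD_smul, pairD_add, Derivation.smul_apply,
    Derivation.leibniz, smul_eq_mul]
  ring

end

theorem quadratic_refinement_general (R A : Type) [CommRing R] [CommRing A] [Algebra R A]
    (h2 : (2 : A) = 0) (η : Ω[A⁄R]) :
    (∀ θ₁ θ₂ : Derivation R A A,
      Qform h2 η (θ₁ + θ₂) - Qform h2 η θ₁ - Qform h2 η θ₂ = dEta η θ₁ θ₂) ∧
    (∀ (z : A) (θ : Derivation R A A), Qform h2 η (z • θ) = z ^ 2 * Qform h2 η θ) :=
  ⟨Qform_add_sub_Qform_sub_Qform h2 η, Qform_smul h2 η⟩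

/-- in characteristic `2`, with `ω = dη` an exact symplectic form on a smooth
`R_0`-algebra `Z_0`, the map `Q(θ) = L_θ i_θ η − i_{θ^{[2]}} η` satisfies
`Q(θ₁+θ₂) − Q(θ₁) − Q(θ₂) = i_{θ₁} i_{θ₂} ω` and `Q(zθ) = z²·Q(θ)`; i.e. `Q` is a quadratic
refinement of the symmetric bilinear form given by `ω`. -/
theorem quadratic_refinement (R A : Type) [CommRing R] [CommRing A] [Algebra R A]
    (h2R : (2 : R) = 0) (h2 : (2 : A) = 0)
    (hsmooth : Algebra.Smooth R A) (η : Ω[A⁄R]) :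
    (∀ θ₁ θ₂ : Derivation R A A,
      Qform h2 η (θ₁ + θ₂) - Qform h2 η θ₁ - Qform h2 η θ₂ = dEta η θ₁ θ₂) ∧
    (∀ (z : A) (θ : Derivation R A A), Qform h2 η (z • θ) = z ^ 2 * Qform h2 η θ) :=
  quadratic_refinement_general R A h2 η
end
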